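/- Let θ : [s₁, ∞) → ℝ be a solution of θ'(s) = −θ(s)²/2 − R(s) with R(s) ≥ 0 continuous, and suppose θ(s₀) < 0 for some s₀ ≥ s₁. Then θ(s) < 0 for all s ≥ s₀ in the maximal interval of existence; moreover the solution blows up to −∞ at some finite s* ≤ s₀ + 2/|θ(s₀)|. -/

import Mathlib

open Set Filter

/-!
Along the flow `θ' ≤ -θ²/2` the expansion is nonincreasing, so it stays negative once it is.
Where `θ < 0`, the quantity `1/θ - s/2` has derivative `-θ'/θ² - 1/2 ≥ 0`, so `1/θ` grows at
least at rate `1/2`; being negative, `1/θ` can do so for a parameter length less than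
`2/|θ(s₀)|` only, which bounds the interval of existence.
-/

namespace Riccati

variable {D : Set ℝ} {θ θ' : ℝ → ℝ}

theorem antitoneOn_of_le_neg_sq_div_two (hD : Convex ℝ D)
    (hθ : ∀ s ∈ D, HasDerivAt θ (θ' s) s) (hθ' : ∀ s ∈ D, θ' s ≤ -θ s ^ 2 / 2) :
    AntitoneOn θ D :=
  antitoneOn_of_hasDerivWithinAt_nonpos hD
    (fun s hs => (hθ s hs).continuousAt.continuousWithinAt)
    (fun s hs => (hθ s (interior_subset hs)).hasDerivWithinAt)
    (fun s hs => (hθ' s (interior_subset hs)).trans (by nlinarith [sq_nonneg (θ s)]))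

theorem monotoneOn_inv_sub_half (hD : Convex ℝ D)
    (hθ : ∀ s ∈ D, HasDerivAt θ (θ' s) s) (hθ' : ∀ s ∈ D, θ' s ≤ -θ s ^ 2 / 2)
    (hne : ∀ s ∈ D, θ s ≠ 0) :
    MonotoneOn (fun s => (θ s)⁻¹ - s / 2) D := by
  have hderiv : ∀ s ∈ D,
      HasDerivAt (fun s => (θ s)⁻¹ - s / 2) (-θ' s / θ s ^ 2 - 1 / 2) s := fun s hs =>
    (((hθ s hs).inv (hne s hs)).sub ((hasDerivAt_id s).div_const 2)).congr_deriv (by simp)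
  refine monotoneOn_of_hasDerivWithinAt_nonneg hD
    (fun s hs => (hderiv s hs).continuousAt.continuousWithinAt)
    (fun s hs => (hderiv s (interior_subset hs)).hasDerivWithinAt) fun s hs => ?_
  have hs := interior_subset hs
  have hsq : 0 < θ s ^ 2 := sq_pos_of_ne_zero (hne s hs)
  rw [sub_nonneg, le_div_iff₀ hsq]
  linarith [hθ' s hs]

theorem lt_add_two_div_abs_of_neg {a c : ℝ} (hac : a ≤ c)
    (hθ : ∀ s ∈ Icc a c, HasDerivAt θ (θ' s) s) (hθ' : ∀ s ∈ Icc a c, θ' s ≤ -θ s ^ 2 / 2)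
    (hneg : ∀ s ∈ Icc a c, θ s < 0) :
    c < a + 2 / |θ a| := by
  have hmono := monotoneOn_inv_sub_half (convex_Icc a c) hθ hθ' (fun s hs => (hneg s hs).ne)
    (left_mem_Icc.2 hac) (right_mem_Icc.2 hac) hac
  have hθa := hneg a (left_mem_Icc.2 hac)
  have hθc : (θ c)⁻¹ < 0 := inv_lt_zero.2 (hneg c (right_mem_Icc.2 hac))
  have habs : 2 / |θ a| = -2 * (θ a)⁻¹ := by
    rw [abs_of_neg hθa]; field_simp
  simp only at hmono
  linarith

end Riccati

open Riccati in
theorem raychaudhuri_focusing_general (s₁ T s₀ : ℝ) (θ R : ℝ → ℝ)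
    (hR_pos : ∀ s ∈ Ici s₁, 0 ≤ R s)
    (hode : ∀ s ∈ Ico s₁ T, HasDerivAt θ (- θ s ^ 2 / 2 - R s) s)
    (hs₀ : s₀ ∈ Ico s₁ T) (hneg : θ s₀ < 0) :
    (∀ s ∈ Ico s₀ T, θ s < 0) ∧ T ≤ s₀ + 2 / |θ s₀| := by
  have hsub : Ico s₀ T ⊆ Ico s₁ T := Ico_subset_Ico_left hs₀.1
  have hθ : ∀ s ∈ Ico s₀ T, HasDerivAt θ (- θ s ^ 2 / 2 - R s) s := fun s hs => hode s (hsub hs)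
  have hθ' : ∀ s ∈ Ico s₀ T, - θ s ^ 2 / 2 - R s ≤ - θ s ^ 2 / 2 := fun s hs =>
    sub_le_self _ (hR_pos s (hsub hs).1)
  have hstay : ∀ s ∈ Ico s₀ T, θ s < 0 := fun s hs =>
    (antitoneOn_of_le_neg_sq_div_two (convex_Ico s₀ T) hθ hθ' ⟨le_rfl, hs₀.2⟩ hs hs.1).trans_lt
      hneg
  refine ⟨hstay, le_of_not_gt fun hT => ?_⟩
  have hIcc : Icc s₀ (s₀ + 2 / |θ s₀|) ⊆ Ico s₀ T := Icc_subset_Ico_right hT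
  have hlen : s₀ ≤ s₀ + 2 / |θ s₀| := le_add_of_nonneg_right (by positivity)
  exact (lt_add_two_div_abs_of_neg hlen (fun s hs => hθ s (hIcc hs))
    (fun s hs => hθ' s (hIcc hs)) fun s hs => hstay s (hIcc hs)).false

/-- focusing property of the Raychaudhuri equation. If `θ` solves
`θ' = -θ²/2 - R` with `R ≥ 0` continuous on its (maximal) interval of existence
`[s₁, T)`, and `θ(s₀) < 0` at some `s₀ ≥ s₁`, then `θ` stays negative for all
later parameters in the interval of existence, and the solution blows up at a
finite `s* ≤ s₀ + 2/|θ(s₀)|`, i.e. `T ≤ s₀ + 2/|θ(s₀)|`. -/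
theorem raychaudhuri_focusing (s₁ T s₀ : ℝ) (θ R : ℝ → ℝ)
    (hR_cont : ContinuousOn R (Ici s₁)) (hR_pos : ∀ s ∈ Ici s₁, 0 ≤ R s)
    (hode : ∀ s ∈ Ico s₁ T, HasDerivAt θ (- θ s ^ 2 / 2 - R s) s)
    (hs₀ : s₀ ∈ Ico s₁ T) (hneg : θ s₀ < 0) :
    (∀ s ∈ Ico s₀ T, θ s < 0) ∧ T ≤ s₀ + 2 / |θ s₀| :=
  raychaudhuri_focusing_general s₁ T s₀ θ R hR_pos hode hs₀ hneg
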